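/- arXiv:1801.07854 — 2 statements merged into one kernel-verified Lean document; each statement's English description precedes it below -/
import Mathlib

section
/- Let k ≥ 3 be an integer and let (n_1, …, n_k) be positive integers with n_1 ≥ n_2 ≥ … ≥ n_k, and set p = n_1 + … + n_k. Suppose p is even and n_1 = p/2 − 1. Then every k-partite graph G with part sizes (n_1, …, n_k) having at least (4 − 2p + 2n_1 + Σ_{i=1}^{k} n_i(p − n_i))/2 edges is hamiltonian. -/
/-!
Bondy–Chvátal: if every graph `H ≥ G` other than the complete graph has a non-adjacent pair
`u, v` with `deg u + deg v ≥ p`, then `G` is hamiltonian, because a Hamiltonian cycle of `H + uv`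
through `uv` is a Hamiltonian path from `u` to `v` in `H`, which Ore's crossing-edge argument
closes into a cycle of `H`.

Let `K` be the complete multipartite graph, `D = K \ G` and `m = n₁`, so `p = 2m + 2`. The edge
bound says `|D| ≤ m`, and since every vertex of `K` has degree at least `p - m`, every `H ≥ G`
satisfies `deg_H w + deg_D w ≥ m + 2`. Take a non-adjacent pair `u, v` of `H` with maximal degree
sum, `h = deg u ≤ deg v`, and suppose `deg u + deg v < p`. The at least `h` non-neighbours `w` of
`v` have `deg w ≤ h`, hence `deg_D w ≥ m + 2 - h`; two of them share at most one edge of `D`,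
which forces `2h ≥ m + 3`, while summing `D`-degrees over them and `v` against `2|D| ≤ 2m` gives
`h (m + 2 - h) + deg_D v ≤ 2m`. These are incompatible.
-/

open SimpleGraph

namespace SimpleGraph

open Finset

variable {V : Type*} {G H : SimpleGraph V}

theorem Walk.IsCycle.getVert_eq_of_not_adj {u v : V} {c : (H ⊔ edge u v).Walk u u}
    (hc : c.IsCycle) {i : ℕ} (hi : i < c.length)
    (hH : ¬H.Adj (c.getVert i) (c.getVert (i + 1))) :
    i = 0 ∧ c.getVert 1 = v ∨ i + 1 = c.length ∧ c.getVert i = v := by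
  have := c.adj_getVert_succ hi
  rw [sup_adj, edge_adj] at this
  rcases (this.resolve_left hH).1 with ⟨hiu, hv⟩ | ⟨hv, hiu⟩
  · have := hc.getVert_injOn' (by simp; omega) (by simp) (hiu.trans c.getVert_zero.symm)
    exact .inl ⟨this, by simpa [this] using hv⟩
  · have := hc.getVert_injOn (by simp; omega) (by simp; omega) (hiu.trans c.getVert_length.symm)
    exact .inr ⟨this, hv⟩

variable [Fintype V]

theorem sum_degree_le_two_mul_card_edgeFinset [DecidableRel G.Adj] (s : Finset V) :
    ∑ w ∈ s, G.degree w ≤ 2 * #G.edgeFinset :=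
  (sum_le_sum_of_subset (subset_univ s)).trans_eq (sum_degrees_eq_twice_card_edges G)

variable [DecidableEq V]

theorem isHamiltonian_of_cycleGraph_isContained (hn : 3 ≤ Fintype.card V)
    (h : cycleGraph (Fintype.card V) ⊑ G) : G.IsHamiltonian := by
  obtain ⟨a, p, hp, hlen⟩ := (cycleGraph_isContained_iff (by omega)).1 h
  exact fun _ ↦ ⟨a, p, Walk.isHamiltonianCycle_iff_isCycle_and_length_eq.2 ⟨hp, hlen⟩⟩

theorem isHamiltonian_top (hn : 3 ≤ Fintype.card V) : (⊤ : SimpleGraph V).IsHamiltonian := by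
  let e := (Fintype.equivFin V).symm
  exact isHamiltonian_of_cycleGraph_isContained hn
    ⟨⟨⟨e, fun h ↦ (top_adj _ _).2 (e.injective.ne h.ne)⟩, e.injective⟩⟩

-- Hamiltonian cycles and paths are handled as sequences `f : ℕ → V` injective on
-- `[0, card V)`, so that index arithmetic stays in `ℕ`.
theorem isHamiltonian_of_injOn_of_adj_succ (hn : 3 ≤ Fintype.card V) (f : ℕ → V)
    (hf : Set.InjOn f (Set.Iio (Fintype.card V)))
    (hadj : ∀ i, i + 1 < Fintype.card V → G.Adj (f i) (f (i + 1)))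
    (hclose : G.Adj (f (Fintype.card V - 1)) (f 0)) : G.IsHamiltonian := by
  have hsub : ∀ i j : Fin (Fintype.card V), (i - j : Fin _).val = 1 → G.Adj (f i) (f j) := by
    intro i j h
    rcases le_or_gt j i with hji | hij
    · rw [Fin.coe_sub_iff_le.2 hji] at h
      rw [show (i : ℕ) = j + 1 by omega]
      exact (hadj j (by omega)).symm
    · rw [Fin.coe_sub_iff_lt.2 hij] at h
      rw [show (i : ℕ) = 0 by omega, show (j : ℕ) = Fintype.card V - 1 by omega]
      exact hclose.symm
  refine isHamiltonian_of_cycleGraph_isContained hn ⟨⟨⟨(f ·), fun h ↦ ?_⟩, ?_⟩⟩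
  · exact (cycleGraph_adj'.1 h).elim (hsub _ _) fun h ↦ (hsub _ _ h).symm
  · exact fun i j h ↦ Fin.ext (hf i.2 j.2 h)

theorem exists_lt_card_eq_of_injOn {f : ℕ → V} (hf : Set.InjOn f (Set.Iio (Fintype.card V)))
    (w : V) : ∃ j < Fintype.card V, f j = w := by
  have himage : (range (Fintype.card V)).image f = univ :=
    eq_univ_of_card _ <| by rw [card_image_of_injOn (by simpa using hf), card_range]
  simpa using (himage ▸ mem_univ w : w ∈ (range (Fintype.card V)).image f)

theorem card_filter_adj_eq_degree [DecidableRel G.Adj] {f : ℕ → V}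
    (hf : Set.InjOn f (Set.Iio (Fintype.card V))) (w : V) :
    #{j ∈ range (Fintype.card V) | G.Adj w (f j)} = G.degree w := by
  refine card_nbij f (fun j hj ↦ by simpa using (mem_filter.1 hj).2) ?_ ?_
  · exact hf.mono fun j hj ↦ by simpa using (mem_filter.1 hj).1
  · intro x hx
    obtain ⟨j, hj, rfl⟩ := exists_lt_card_eq_of_injOn hf x
    exact ⟨j, by simpa [hj] using hx, rfl⟩

theorem exists_crossing_edges [DecidableRel G.Adj] {f : ℕ → V}
    (hf : Set.InjOn f (Set.Iio (Fintype.card V)))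
    (hdeg : Fintype.card V ≤ G.degree (f 0) + G.degree (f (Fintype.card V - 1))) :
    ∃ j, 0 < j ∧ j < Fintype.card V ∧
      G.Adj (f 0) (f j) ∧ G.Adj (f (Fintype.card V - 1)) (f (j - 1)) := by
  set n := Fintype.card V
  set S := {j ∈ range n | G.Adj (f 0) (f j)}
  set T := {i ∈ range n | G.Adj (f (n - 1)) (f i)}
  have hS : S ⊆ Ico 1 n := fun j hj ↦ by
    obtain ⟨hj, hadj⟩ := mem_filter.1 hj
    have : j ≠ 0 := by rintro rfl; exact hadj.ne rfl
    simp only [mem_range, mem_Ico] at hj ⊢; omega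
  have hT : T.image (· + 1) ⊆ Ico 1 n := fun j hj ↦ by
    obtain ⟨i, hi, rfl⟩ := mem_image.1 hj
    obtain ⟨hi, hadj⟩ := mem_filter.1 hi
    have : i ≠ n - 1 := by rintro rfl; exact hadj.ne rfl
    simp only [mem_range, mem_Ico] at hi ⊢; omega
  have hcard : #S + #(T.image (· + 1)) = G.degree (f 0) + G.degree (f (n - 1)) := by
    rw [card_image_of_injective _ (add_left_injective 1), card_filter_adj_eq_degree hf,
      card_filter_adj_eq_degree hf]
  obtain ⟨j, hj⟩ : (S ∩ T.image (· + 1)).Nonempty := by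
    rw [← card_pos]
    have := card_union_add_card_inter S (T.image (· + 1))
    have := card_le_card (union_subset hS hT)
    rw [Nat.card_Ico] at this
    have := Fintype.card_pos_iff.2 ⟨f 0⟩
    omega
  obtain ⟨hjS, hjT⟩ := mem_inter.1 hj
  obtain ⟨i, hiT, rfl⟩ := mem_image.1 hjT
  have := hS hjS
  simp only [mem_Ico, mem_filter, S, T] at this hjS hiT
  exact ⟨i + 1, by omega, by omega, hjS.2, hiT.2⟩

/-- Reversing the segment `f j, …, f (n - 1)` of a Hamiltonian path closes it into a cycle. -/
theorem isHamiltonian_of_crossing_edges (hn : 3 ≤ Fintype.card V) {f : ℕ → V}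
    (hf : Set.InjOn f (Set.Iio (Fintype.card V)))
    (hadj : ∀ i, i + 1 < Fintype.card V → G.Adj (f i) (f (i + 1))) {j : ℕ} (hj : 0 < j)
    (hjn : j < Fintype.card V) (h0 : G.Adj (f 0) (f j))
    (h1 : G.Adj (f (Fintype.card V - 1)) (f (j - 1))) : G.IsHamiltonian := by
  refine isHamiltonian_of_injOn_of_adj_succ hn
    (fun k ↦ if k < j then f k else f (Fintype.card V - 1 + j - k)) ?_ (fun k hk ↦ ?_) ?_
  · intro a (ha : a < Fintype.card V) b (hb : b < Fintype.card V) hab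
    dsimp only at hab
    split_ifs at hab <;>
      have := hf (Set.mem_Iio.2 (by omega)) (Set.mem_Iio.2 (by omega)) hab <;> omega
  · split_ifs with hk₁ hk₂ hk₂
    · exact hadj k (by omega)
    · rw [show k = j - 1 by omega,
        show Fintype.card V - 1 + j - (j - 1 + 1) = Fintype.card V - 1 by omega]
      exact h1.symm
    · omega
    · rw [show Fintype.card V - 1 + j - k = Fintype.card V - 1 + j - (k + 1) + 1 by omega]
      exact (hadj _ (by omega)).symm
  · simp only [show ¬Fintype.card V - 1 < j by omega, if_pos hj, if_false,
      show Fintype.card V - 1 + j - (Fintype.card V - 1) = j by omega]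
    exact h0.symm

theorem isHamiltonian_of_path_of_card_le_degree_add [DecidableRel G.Adj] (hn : 3 ≤ Fintype.card V)
    {f : ℕ → V} (hf : Set.InjOn f (Set.Iio (Fintype.card V)))
    (hadj : ∀ i, i + 1 < Fintype.card V → G.Adj (f i) (f (i + 1)))
    (hdeg : Fintype.card V ≤ G.degree (f 0) + G.degree (f (Fintype.card V - 1))) :
    G.IsHamiltonian :=
  let ⟨_, hj, hjn, h0, h1⟩ := exists_crossing_edges hf hdeg
  isHamiltonian_of_crossing_edges hn hf hadj hj hjn h0 h1

theorem isHamiltonian_of_isHamiltonianCycle_sup_edge [DecidableRel H.Adj] {u v : V}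
    (hdeg : Fintype.card V ≤ H.degree u + H.degree v)
    {c : (H ⊔ edge u v).Walk u u} (hc : c.IsHamiltonianCycle) (hfirst : H.Adj u (c.getVert 1)) :
    H.IsHamiltonian := by
  have hlen : c.length = Fintype.card V := hc.length_eq
  have hn : 3 ≤ Fintype.card V := hlen ▸ hc.isCycle.three_le_length
  set f := c.getVert
  have hstep : ∀ {i}, i < Fintype.card V → ¬H.Adj (f i) (f (i + 1)) →
      i = 0 ∧ f 1 = v ∨ i + 1 = Fintype.card V ∧ f i = v := fun hi hH ↦
    hlen ▸ hc.isCycle.getVert_eq_of_not_adj (hlen ▸ hi) hH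
  have hf0 : f 0 = u := c.getVert_zero
  have hinj : Set.InjOn f (Set.Iio (Fintype.card V)) := fun i hi j hj ↦
    hc.isCycle.getVert_injOn' (by simp at hi ⊢; omega) (by simp at hj ⊢; omega)
  have hpath : ∀ i, i + 1 < Fintype.card V → H.Adj (f i) (f (i + 1)) := fun i hi ↦ by
    rcases Nat.eq_zero_or_pos i with rfl | hi₀
    · rwa [hf0]
    · exact by_contra fun hH ↦ by have := hstep (by omega) hH; omega
  by_cases hlast : H.Adj (f (Fintype.card V - 1)) (f 0)
  · exact isHamiltonian_of_injOn_of_adj_succ hn f hinj hpath hlast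
  · have hfn : f (Fintype.card V - 1 + 1) = f 0 := by
      rw [Nat.sub_add_cancel (by omega), hf0, ← hlen]; exact c.getVert_length
    have hv : f (Fintype.card V - 1) = v :=
      ((hstep (by omega) (by rwa [hfn])).resolve_left fun h ↦ absurd h.1 (by omega)).2
    exact isHamiltonian_of_path_of_card_le_degree_add hn hinj hpath (by rwa [hf0, hv])

theorem isHamiltonian_of_isHamiltonian_sup_edge [DecidableRel H.Adj] {u v : V} (huv : u ≠ v)
    (hdeg : Fintype.card V ≤ H.degree u + H.degree v) (h : (H ⊔ edge u v).IsHamiltonian) :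
    H.IsHamiltonian := by
  have : Nontrivial V := ⟨u, v, huv⟩
  obtain ⟨c, hc⟩ := h.exists_isHamiltonianCycle u
  by_cases hfirst : H.Adj u (c.getVert 1)
  · exact isHamiltonian_of_isHamiltonianCycle_sup_edge hdeg hc hfirst
  -- otherwise the first step of `c` is `uv`, so its last step lies in `H` and we reverse `c`
  have hn := hc.isCycle.three_le_length
  have hc' : c.reverse.IsHamiltonianCycle :=
    Walk.isHamiltonianCycle_iff_isCycle_and_length_eq.2
      ⟨hc.isCycle.reverse, by simp [hc.length_eq]⟩
  refine isHamiltonian_of_isHamiltonianCycle_sup_edge hdeg hc' ?_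
  rw [Walk.getVert_reverse]
  by_contra hlast
  have h1 := (hc.isCycle.getVert_eq_of_not_adj (i := 0) (by omega) (by simpa using hfirst))
  have h2 := (hc.isCycle.getVert_eq_of_not_adj (i := c.length - 1) (by omega) fun h ↦ hlast <| by
    rwa [Nat.sub_add_cancel (by omega), c.getVert_length, adj_comm] at h)
  have := hc.isCycle.getVert_injOn (by simp; omega) (by simp; omega)
    ((h1.resolve_right (by omega)).2.trans (h2.resolve_left (by omega)).2.symm)
  omega

theorem isHamiltonian_of_forall_exists_card_le_degree_add (hn : 3 ≤ Fintype.card V)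
    (h : ∀ (H : SimpleGraph V) [DecidableRel H.Adj], G ≤ H → H ≠ ⊤ →
      ∃ u v, u ≠ v ∧ ¬H.Adj u v ∧ Fintype.card V ≤ H.degree u + H.degree v) :
    G.IsHamiltonian := by
  classical
  suffices ∀ H : SimpleGraph V, G ≤ H → H.IsHamiltonian from this G le_rfl
  intro H
  induction H using WellFoundedGT.induction with
  | _ H ih =>
    intro hGH
    by_cases hH : H = ⊤
    · exact hH ▸ isHamiltonian_top hn
    obtain ⟨u, v, huv, hnadj, hdeg⟩ := h H hGH hH
    have hlt : H < H ⊔ edge u v :=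
      left_lt_sup.2 fun hle ↦ hnadj (hle ((edge_adj ..).2 ⟨.inl ⟨rfl, rfl⟩, huv⟩))
    exact isHamiltonian_of_isHamiltonian_sup_edge huv hdeg (ih _ hlt (hGH.trans hlt.le))

theorem exists_not_adj_forall_degree_add_le [DecidableRel H.Adj] (hH : H ≠ ⊤) :
    ∃ u v, u ≠ v ∧ ¬H.Adj u v ∧ H.degree u ≤ H.degree v ∧
      ∀ a b, a ≠ b → ¬H.Adj a b → H.degree a + H.degree b ≤ H.degree u + H.degree v := by
  set s := ({x | x.1 ≠ x.2 ∧ ¬H.Adj x.1 x.2} : Finset (V × V))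
  obtain ⟨a, b, hab⟩ := ne_top_iff_exists_not_adj.1 hH
  obtain ⟨⟨u, v⟩, huv, hmax⟩ :=
    exists_max_image s (fun x ↦ H.degree x.1 + H.degree x.2) ⟨(a, b), by simpa [s] using hab⟩
  simp only [s, mem_filter, mem_univ, true_and, Prod.forall] at huv hmax
  rcases le_total (H.degree u) (H.degree v) with h | h
  · exact ⟨u, v, huv.1, huv.2, h, fun a b hab hnadj ↦ hmax a b ⟨hab, hnadj⟩⟩
  · refine ⟨v, u, huv.1.symm, fun h ↦ huv.2 h.symm, h, fun a b hab hnadj ↦ ?_⟩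
    rw [add_comm (H.degree v)]
    exact hmax a b ⟨hab, hnadj⟩

theorem degree_add_degree_le_card_edgeFinset_add_one [DecidableRel G.Adj] {a b : V}
    (hab : a ≠ b) : G.degree a + G.degree b ≤ #G.edgeFinset + 1 := by
  rw [← card_incidenceFinset_eq_degree, ← card_incidenceFinset_eq_degree,
    ← card_union_add_card_inter]
  gcongr
  · exact union_subset (G.incidenceFinset_subset a) (G.incidenceFinset_subset b)
  · refine card_le_one.2 fun e he e' he' ↦ ?_
    simp only [mem_inter, mem_incidenceFinset, incidenceSet, Set.mem_ofPred_eq] at he he'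
    rw [(Sym2.mem_and_mem_iff hab).1 ⟨he.1.2, he.2.2⟩,
      (Sym2.mem_and_mem_iff hab).1 ⟨he'.1.2, he'.2.2⟩]

theorem exists_not_adj_card_le_degree_add_degree [DecidableRel H.Adj] {D : SimpleGraph V}
    [DecidableRel D.Adj] {m : ℕ} (hcard : Fintype.card V = 2 * m + 2) (hD : #D.edgeFinset ≤ m)
    (hdeg : ∀ w, m + 2 ≤ H.degree w + D.degree w) (hH : H ≠ ⊤) :
    ∃ u v, u ≠ v ∧ ¬H.Adj u v ∧ Fintype.card V ≤ H.degree u + H.degree v := by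
  obtain ⟨u, v, huv, hnadj, hle, hmax⟩ := exists_not_adj_forall_degree_add_le hH
  refine ⟨u, v, huv, hnadj, ?_⟩
  by_contra! hlt
  set A := Hᶜ.neighborFinset v
  have hA : #A + H.degree v + 1 = Fintype.card V := by
    rw [card_neighborFinset_eq_degree, degree_compl]
    have := H.degree_lt_card_verts v
    omega
  have huA : u ∈ A := by simpa [A] using ⟨huv.symm, fun h ↦ hnadj h.symm⟩
  have hvA : v ∉ A := by simp [A]
  have hDA : ∀ w ∈ A, m + 2 ≤ H.degree u + D.degree w := fun w hw ↦ by
    obtain ⟨hvw, hnadj'⟩ := (compl_adj H v w).1 ((mem_neighborFinset _ _ _).1 hw)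
    have := hmax w v hvw.symm fun h ↦ hnadj' h.symm
    have := hdeg w
    omega
  have hsum : D.degree v + ∑ w ∈ A, D.degree w ≤ 2 * m := by
    have := sum_degree_le_two_mul_card_edgeFinset (G := D) (insert v A)
    rw [sum_insert hvA] at this
    omega
  have hu2 : 2 ≤ H.degree u := by
    have := hdeg u
    have := D.degree_le_card_edgeFinset u
    omega
  obtain ⟨w, hwA, hwu⟩ := exists_mem_ne (by omega : 1 < #A) u
  have hpair := degree_add_degree_le_card_edgeFinset_add_one (G := D) hwu
  have hDw := hDA w hwA
  have hDu := hDA u huA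
  obtain ⟨x, hx⟩ : ∃ x, m + 2 = H.degree u + x := ⟨m + 2 - H.degree u, by omega⟩
  have hA_sum : #A * x ≤ ∑ w ∈ A, D.degree w := by
    rw [← smul_eq_mul]
    exact card_nsmul_le_sum _ _ _ fun w hw ↦ by have := hDA w hw; omega
  have hprod : H.degree u * x + D.degree v ≤ 2 * m := by
    have := (Nat.mul_le_mul_right x (by omega : H.degree u ≤ #A)).trans hA_sum
    omega
  have hDv := hdeg v
  -- `deg u * x - 2m = (deg u - 2) (x - 2)`, and `deg_D v = 0` forces `deg u, x ≥ 3`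
  rcases Nat.eq_zero_or_pos (D.degree v) with h0 | h0
  · nlinarith only [hprod, hx, (by omega : 3 ≤ H.degree u), (by omega : 3 ≤ x)]
  · nlinarith only [hprod, hx, h0, hu2, (by omega : 2 ≤ x)]

theorem degree_add_degree_sdiff {G K : SimpleGraph V} [DecidableRel G.Adj] [DecidableRel K.Adj]
    (h : G ≤ K) (v : V) : G.degree v + (K \ G).degree v = K.degree v := by
  have hsub : G.neighborFinset v ⊆ K.neighborFinset v := fun w hw ↦ by
    simpa using h ((mem_neighborFinset _ _ _).1 hw)
  have : (K \ G).neighborFinset v = K.neighborFinset v \ G.neighborFinset v := by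
    ext w; simp
  simp only [← card_neighborFinset_eq_degree, this]
  rw [add_comm, card_sdiff_add_card_eq_card hsub]

theorem card_edgeFinset_sdiff_add_card_edgeFinset {G K : SimpleGraph V} [DecidableRel G.Adj]
    [DecidableRel K.Adj] (h : G ≤ K) : #(K \ G).edgeFinset + #G.edgeFinset = #K.edgeFinset := by
  rw [edgeFinset_sdiff, card_sdiff_add_card_eq_card (edgeFinset_mono h)]

variable {ι : Type*} [Fintype ι] [DecidableEq ι] {W : ι → Type*} [∀ i, Fintype (W i)]
  [DecidableRel (completeMultipartiteGraph W).Adj]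

theorem degree_completeMultipartiteGraph_add_card (v : Σ i, W i) :
    (completeMultipartiteGraph W).degree v + Fintype.card (W v.1) =
      Fintype.card (Σ i, W i) := by
  have hpart : #(univ.filter fun w : Σ i, W i ↦ w.1 = v.1) = Fintype.card (W v.1) := by
    rw [← card_univ, ← card_map (Function.Embedding.sigmaMk v.1)]
    congr 1
    ext ⟨i, x⟩
    simp only [mem_filter, mem_univ, true_and, mem_map, Function.Embedding.sigmaMk_apply]
    constructor
    · rintro rfl; exact ⟨x, rfl⟩
    · rintro ⟨y, hy⟩; cases hy; rfl
  have hnbr :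
      (completeMultipartiteGraph W).neighborFinset v = univ.filter fun w ↦ ¬w.1 = v.1 := by
    ext w; simp [eq_comm]
  rw [← card_neighborFinset_eq_degree, hnbr, ← hpart, add_comm, card_filter_add_card_filter_not,
    card_univ]

theorem two_mul_card_edgeFinset_completeMultipartiteGraph :
    (2 * #(completeMultipartiteGraph W).edgeFinset : ℤ) =
      ∑ i, (Fintype.card (W i) : ℤ) * (Fintype.card (Σ i, W i) - Fintype.card (W i)) := by
  have hdeg : ∀ i (x : W i), ((completeMultipartiteGraph W).degree ⟨i, x⟩ : ℤ) =
      Fintype.card (Σ i, W i) - Fintype.card (W i) := fun i x ↦ by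
    rw [← degree_completeMultipartiteGraph_add_card ⟨i, x⟩]; push_cast; ring
  rw [← Nat.cast_ofNat, ← Nat.cast_mul, ← sum_degrees_eq_twice_card_edges, Nat.cast_sum,
    Fintype.sum_sigma]
  refine sum_congr rfl fun i _ ↦ ?_
  rw [sum_congr rfl fun x _ ↦ hdeg i x, sum_const, card_univ, nsmul_eq_mul]

end SimpleGraph

/-- Theorem 22 / `evenhalf-1`: Let `k ≥ 3` and `(n 0, …, n (k-1))` be positive
integers with `n 0 ≥ … ≥ n (k-1)` and `p = ∑ n i`. If `p` is even and `n 0 = p/2 − 1`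
(i.e. `p = 2 * n 0 + 2`), then every `k`-partite graph `G` with these part sizes having at least
`(4 − 2p + 2 n 0 + Σᵢ n i (p − n i))/2` edges is hamiltonian. -/
theorem kpartite_edges_hamiltonian_of_even_half_minus_one
    (k : ℕ) (hk : 3 ≤ k) (n : Fin k → ℕ) (hmono : Antitone n)
    (hp : ∑ i, n i = 2 * n ⟨0, by omega⟩ + 2)
    (G : SimpleGraph ((i : Fin k) × Fin (n i)))
    (hG : G ≤ completeMultipartiteGraph (fun i => Fin (n i)))
    (hedges : 4 - 2 * (∑ i, (n i : ℤ)) + 2 * (n ⟨0, by omega⟩ : ℤ) +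
        ∑ i, (n i : ℤ) * ((∑ j, (n j : ℤ)) - (n i : ℤ)) ≤ 2 * (G.edgeSet.ncard : ℤ)) :
    G.IsHamiltonian := by
  classical
  set m := n ⟨0, by omega⟩
  have hle : ∀ i, n i ≤ m := fun i ↦ hmono (Nat.zero_le _)
  have hcard : Fintype.card ((i : Fin k) × Fin (n i)) = 2 * m + 2 := by
    simpa [Fintype.card_sigma] using hp
  have hm : 1 ≤ m := by
    by_contra! h0
    have : ∑ i, n i = 0 := Finset.sum_eq_zero fun i _ ↦ by have := hle i; omega
    omega
  set K := completeMultipartiteGraph fun i ↦ Fin (n i)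
  have hD : (K \ G).edgeFinset.card ≤ m := by
    have hK : (2 * K.edgeFinset.card : ℤ) = ∑ i, (n i : ℤ) * (2 * m + 2 - n i) := by
      simpa [hp] using two_mul_card_edgeFinset_completeMultipartiteGraph (W := fun i ↦ Fin (n i))
    have hKG : ((K \ G).edgeFinset.card + G.edgeFinset.card : ℤ) = K.edgeFinset.card := by
      exact_mod_cast card_edgeFinset_sdiff_add_card_edgeFinset hG
    have hpZ : (∑ i, (n i : ℤ)) = 2 * m + 2 := by exact_mod_cast hp
    rw [← coe_edgeFinset, Set.ncard_coe_finset, hpZ] at hedges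
    linarith
  have hdeg : ∀ w, m + 2 ≤ G.degree w + (K \ G).degree w := fun w ↦ by
    have hw : K.degree w + n w.1 = 2 * m + 2 := by
      simpa [hcard] using degree_completeMultipartiteGraph_add_card (W := fun i ↦ Fin (n i)) w
    rw [degree_add_degree_sdiff hG]
    have := hle w.1
    omega
  refine isHamiltonian_of_forall_exists_card_le_degree_add (by omega) fun H _ hGH hH ↦ ?_
  refine exists_not_adj_card_le_degree_add_degree (D := K \ G) hcard (by convert hD)
    (fun w ↦ ?_) hH
  exact (hdeg w).trans (Nat.add_le_add_right (degree_le_of_le hGH) _)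
end

section
/- For any integer a ≥ 3, let G be the 3-partite graph with part sizes (a, a − 1, 2) obtained from the complete 3-partite graph K(a, a − 1, 2) by choosing a − 1 vertices v_1, …, v_{a−1} in the part V_1 of size a and a vertex u in the part V_2 of size a − 1, and deleting the a − 1 edges v_i u for i = 1, …, a − 1. Then G is hamiltonian, G has at least (4 − 2p + 2n_1 + Σ n_i(p − n_i))/2 edges where p = 2a + 1 and (n_1, n_2, n_3) = (a, a − 1, 2), but G fails Pósa's condition: for r = a one has 1 ≤ r < p/2 and G has at least r vertices of degree at most r. -/
open SimpleGraph

/-- The part (as an element of `Fin 3`) of a vertex of a tripartite vertex set. -/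
def tripart {a b c : ℕ} : Fin a ⊕ Fin b ⊕ Fin c → Fin 3
  | Sum.inl _ => 0
  | Sum.inr (Sum.inl _) => 1
  | Sum.inr (Sum.inr _) => 2

/-- The complete tripartite graph `K(a, b, c)`: two vertices are adjacent iff they lie in
different parts. -/
def completeTripartite (a b c : ℕ) : SimpleGraph (Fin a ⊕ Fin b ⊕ Fin c) where
  Adj x y := tripart x ≠ tripart y
  symm := ⟨fun _ _ h => Ne.symm h⟩
  loopless := ⟨fun _ h => h rfl⟩

/-! Let `w` be the one vertex of `V₁` that is not among the `vs i`, and let `t₀, t₁` be the two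
vertices of `V₃`. Every edge between `V₁` and `V₂ \ {u}` survives, as do all edges at `w`, so
`t₀ w u t₁` followed by a path alternating between the `vs i` and `V₂ \ {u}` and returning to
`t₀` is a Hamiltonian cycle. The edge bound is `|E(K(a, a - 1, 2))| - (a - 1)`, which is what
survives the removal of the `a - 1` star edges. That removal leaves each `vs i` with `a`
neighbours and `u` with three, so `a` vertices have degree at most `a`. -/

open SimpleGraph

theorem Function.Injective.exists_range_eq_compl_singleton {α β : Type*} [Fintype α]
    [Fintype β] {f : α → β} (hf : f.Injective) (hcard : Fintype.card β = Fintype.card α + 1) :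
    ∃ w, Set.range f = {w}ᶜ := by
  classical
  obtain ⟨w, hw⟩ : ∃ w, (Finset.univ.image f)ᶜ = {w} := Finset.card_eq_one.1 (by
    rw [Finset.card_compl, Finset.card_image_of_injective _ hf, Finset.card_univ]; omega)
  refine ⟨w, ?_⟩
  rw [← Finset.coe_singleton, ← hw, Finset.coe_compl, compl_compl]
  simp

namespace SimpleGraph

variable {V W : Type*} [Fintype V]

theorem ncard_neighborSet (G : SimpleGraph V) [DecidableRel G.Adj] (v : V) :
    (G.neighborSet v).ncard = G.degree v := by
  rw [← card_neighborSet_eq_degree, Set.ncard_eq_toFinset_card', Set.toFinset_card]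

variable [DecidableEq V]

theorem degree_deleteEdges_add_card_le (G : SimpleGraph V) [DecidableRel G.Adj]
    (s : Set (Sym2 V)) [DecidableRel (G.deleteEdges s).Adj] (v : V) (t : Finset V)
    (ht : t ⊆ G.neighborFinset v) (hts : ∀ w ∈ t, s(v, w) ∈ s) :
    (G.deleteEdges s).degree v + t.card ≤ G.degree v := by
  rw [degree, degree, ← Finset.card_union_of_disjoint]
  · refine Finset.card_le_card (Finset.union_subset (fun w hw ↦ ?_) ht)
    simp only [mem_neighborFinset, deleteEdges_adj] at hw ⊢
    exact hw.1
  · refine Finset.disjoint_left.2 fun w hw hwt ↦ ?_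
    simp only [mem_neighborFinset, deleteEdges_adj] at hw
    exact hw.2 (hts w hwt)

theorem cycleGraph_isHamiltonian (n : ℕ) : (cycleGraph (n + 3)).IsHamiltonian := fun _ ↦
  ⟨0, cycleGraph.cycle n,
    Walk.isHamiltonianCycle_iff_isCycle_and_length_eq.2 ⟨cycleGraph.isCycle_cycle, by simp⟩⟩

theorem IsHamiltonian.of_hom_bijective [Fintype W] [DecidableEq W] {G : SimpleGraph V}
    {H : SimpleGraph W} (hG : G.IsHamiltonian) (f : G →g H) (hf : Function.Bijective f) :
    H.IsHamiltonian := fun hW ↦ by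
  obtain ⟨v, p, hp⟩ := hG (by rwa [Fintype.card_of_bijective hf])
  exact ⟨f v, p.map f, hp.map hf⟩

theorem isHamiltonian_of_adj_succ {G : SimpleGraph V} {n : ℕ} (f : Fin (n + 3) → V)
    (hf : Function.Bijective f) (hadj : ∀ i, G.Adj (f i) (f (i + 1))) : G.IsHamiltonian := by
  refine (cycleGraph_isHamiltonian n).of_hom_bijective ⟨f, fun {i j} hij ↦ ?_⟩ hf
  rcases cycleGraph_adj.1 hij with h | h
  · rw [sub_eq_iff_eq_add'.1 h]
    exact (hadj j).symm
  · rw [sub_eq_iff_eq_add'.1 h]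
    exact hadj i

end SimpleGraph

section CompleteTripartite

variable {a b c : ℕ}

@[simp]
theorem completeTripartite_adj {x y : Fin a ⊕ Fin b ⊕ Fin c} :
    (completeTripartite a b c).Adj x y ↔ tripart x ≠ tripart y := Iff.rfl

section Degree

variable [DecidableRel (completeTripartite a b c).Adj]

theorem completeTripartite_degree_inl (x : Fin a) :
    (completeTripartite a b c).degree (.inl x) = b + c := by
  rw [degree, neighborFinset_eq_filter, Finset.card_filter, Fintype.sum_sum_type,
    Fintype.sum_sum_type]
  simp [tripart]

theorem completeTripartite_degree_inr_inl (y : Fin b) :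
    (completeTripartite a b c).degree (.inr (.inl y)) = a + c := by
  rw [degree, neighborFinset_eq_filter, Finset.card_filter, Fintype.sum_sum_type,
    Fintype.sum_sum_type]
  simp [tripart]

theorem completeTripartite_degree_inr_inr (z : Fin c) :
    (completeTripartite a b c).degree (.inr (.inr z)) = a + b := by
  rw [degree, neighborFinset_eq_filter, Finset.card_filter, Fintype.sum_sum_type,
    Fintype.sum_sum_type]
  simp [tripart]

end Degree

theorem completeTripartite_two_mul_ncard_edgeSet :
    2 * (completeTripartite a b c).edgeSet.ncard = a * (b + c) + b * (a + c) + c * (a + b) := by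
  classical
  rw [← coe_edgeFinset, Set.ncard_coe_finset, ← sum_degrees_eq_twice_card_edges]
  simp [Fintype.sum_sum_type, completeTripartite_degree_inl, completeTripartite_degree_inr_inl,
    completeTripartite_degree_inr_inr, add_assoc]

end CompleteTripartite

def starEdges {a b c : ℕ} {ι : Type*} (vs : ι → Fin a) (u : Fin b) :
    Set (Sym2 (Fin a ⊕ Fin b ⊕ Fin c)) :=
  {e | ∃ i, e = s(Sum.inl (vs i), Sum.inr (Sum.inl u))}

def completeTripartiteMinusStar (a b c : ℕ) {ι : Type*} (vs : ι → Fin a) (u : Fin b) :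
    SimpleGraph (Fin a ⊕ Fin b ⊕ Fin c) :=
  (completeTripartite a b c).deleteEdges (starEdges vs u)

section MinusStar

variable {a b c : ℕ} {ι : Type*} {vs : ι → Fin a} {u : Fin b}

@[simp]
theorem completeTripartiteMinusStar_adj_inl_inr_inl {x : Fin a} {y : Fin b} :
    (completeTripartiteMinusStar a b c vs u).Adj (.inl x) (.inr (.inl y)) ↔
      y ≠ u ∨ x ∉ Set.range vs := by
  simp [completeTripartiteMinusStar, starEdges, tripart, or_iff_not_imp_left, @eq_comm _ x]
  tauto

@[simp]
theorem completeTripartiteMinusStar_adj_inl_inr_inr {x : Fin a} {z : Fin c} :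
    (completeTripartiteMinusStar a b c vs u).Adj (.inl x) (.inr (.inr z)) := by
  simp [completeTripartiteMinusStar, starEdges, tripart]

@[simp]
theorem completeTripartiteMinusStar_adj_inr_inl_inr_inr {y : Fin b} {z : Fin c} :
    (completeTripartiteMinusStar a b c vs u).Adj (.inr (.inl y)) (.inr (.inr z)) := by
  simp [completeTripartiteMinusStar, starEdges, tripart]

theorem completeTripartiteMinusStar_ncard_neighborSet_inl_add_one_le (i : ι) :
    ((completeTripartiteMinusStar a b c vs u).neighborSet (.inl (vs i))).ncard + 1 ≤ b + c := by
  classical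
  have := degree_deleteEdges_add_card_le (completeTripartite a b c) (starEdges vs u)
    (.inl (vs i)) {.inr (.inl u)} (by simp [tripart]) (by simp [starEdges])
  rwa [Finset.card_singleton, completeTripartite_degree_inl, ← ncard_neighborSet] at this

variable [Fintype ι]

theorem ncard_starEdges_le : (starEdges (c := c) vs u).ncard ≤ Fintype.card ι := by
  classical
  calc (starEdges (c := c) vs u).ncard
      = (Finset.univ.image fun i ↦ s(Sum.inl (vs i), Sum.inr (Sum.inl u))).card := by
        rw [← Set.ncard_coe_finset]; congr; ext; simp [starEdges, eq_comm]
    _ ≤ Fintype.card ι := Finset.card_image_le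

theorem ncard_edgeSet_completeTripartite_le :
    (completeTripartite a b c).edgeSet.ncard ≤
      (completeTripartiteMinusStar a b c vs u).edgeSet.ncard + Fintype.card ι := by
  have := Set.le_ncard_sdiff (starEdges vs u) (completeTripartite a b c).edgeSet
  have := ncard_starEdges_le (c := c) (vs := vs) (u := u)
  rw [completeTripartiteMinusStar, edgeSet_deleteEdges]
  omega

theorem completeTripartiteMinusStar_ncard_neighborSet_add_card_le
    (hvs : Function.Injective vs) :
    ((completeTripartiteMinusStar a b c vs u).neighborSet (.inr (.inl u))).ncard +
      Fintype.card ι ≤ a + c := by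
  classical
  have := degree_deleteEdges_add_card_le (completeTripartite a b c) (starEdges vs u)
    (.inr (.inl u)) (Finset.univ.image (.inl ∘ vs)) (by simp [Finset.subset_iff, tripart])
    (by simp [starEdges])
  rwa [Finset.card_image_of_injective _ (Sum.inl_injective.comp hvs), Finset.card_univ,
    completeTripartite_degree_inr_inl, ← ncard_neighborSet] at this

theorem card_add_one_le_ncard_setOf_ncard_neighborSet_le (hvs : Function.Injective vs)
    {r : ℕ} (hr₁ : b + c ≤ r + 1) (hr₂ : a + c ≤ r + Fintype.card ι) :
    Fintype.card ι + 1 ≤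
      {x | ((completeTripartiteMinusStar a b c vs u).neighborSet x).ncard ≤ r}.ncard := by
  classical
  set T : Finset (Fin a ⊕ Fin b ⊕ Fin c) :=
    insert (.inr (.inl u)) (Finset.univ.image (.inl ∘ vs))
  have hT : T.card = Fintype.card ι + 1 := by
    rw [Finset.card_insert_of_notMem (by simp),
      Finset.card_image_of_injective _ (Sum.inl_injective.comp hvs), Finset.card_univ]
  rw [← hT, ← Set.ncard_coe_finset]
  refine Set.ncard_le_ncard fun x hx ↦ ?_
  simp only [T, Finset.coe_insert, Finset.coe_image, Set.mem_insert_iff, Set.mem_image,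
    Function.comp_apply] at hx
  rcases hx with rfl | ⟨i, -, rfl⟩
  · have := completeTripartiteMinusStar_ncard_neighborSet_add_card_le (c := c) (u := u) hvs
    exact show _ ≤ r by omega
  · have := completeTripartiteMinusStar_ncard_neighborSet_inl_add_one_le (c := c) (vs := vs)
      (u := u) i
    exact show _ ≤ r by omega

end MinusStar

section Tour

open Fin.NatCast

variable {m : ℕ} (vs : Fin (m + 2) → Fin (m + 3)) (u : Fin (m + 2)) (w : Fin (m + 3))

-- The cycle `t₀, w, u, t₁, vs 0, z 0, vs 1, z 1, …, z m, vs (m + 1)` with `z = u.succAbove`;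
-- the cycle only uses `k < 2 * m + 7`, where the casts to `Fin` do not wrap around.
def tourVertex : ℕ → Fin (m + 3) ⊕ Fin (m + 2) ⊕ Fin 2
  | 0 => .inr (.inr 0)
  | 1 => .inl w
  | 2 => .inr (.inl u)
  | 3 => .inr (.inr 1)
  | k + 4 => if Even k then .inl (vs (k / 2 : ℕ)) else .inr (.inl (u.succAbove (k / 2 : ℕ)))

theorem tourVertex_add_four_of_even {k : ℕ} (hk : Even k) :
    tourVertex vs u w (k + 4) = .inl (vs (k / 2 : ℕ)) := if_pos hk

theorem tourVertex_add_four_of_odd {k : ℕ} (hk : Odd k) :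
    tourVertex vs u w (k + 4) = .inr (.inl (u.succAbove (k / 2 : ℕ))) :=
  if_neg (Nat.not_even_iff_odd.2 hk)

variable {vs w}

theorem exists_lt_tourVertex_eq (hw : Set.range vs = {w}ᶜ)
    (v : Fin (m + 3) ⊕ Fin (m + 2) ⊕ Fin 2) : ∃ k < 2 * m + 7, tourVertex vs u w k = v := by
  rcases v with x | y | z
  · by_cases hx : x = w
    · exact ⟨1, by omega, by rw [hx]; rfl⟩
    · obtain ⟨i, rfl⟩ : x ∈ Set.range vs := by rw [hw]; exact hx
      refine ⟨2 * i + 4, by omega, ?_⟩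
      rw [tourVertex_add_four_of_even _ _ _ (even_two_mul _), Nat.mul_div_cancel_left _ two_pos,
        Fin.cast_val_eq_self]
  · by_cases hy : y = u
    · exact ⟨2, by omega, by rw [hy]; rfl⟩
    · obtain ⟨j, rfl⟩ := Fin.exists_succAbove_eq hy
      refine ⟨2 * j + 1 + 4, by omega, ?_⟩
      rw [tourVertex_add_four_of_odd _ _ _ (odd_two_mul_add_one _),
        show (2 * j.val + 1) / 2 = j by omega, Fin.cast_val_eq_self]
  · fin_cases z
    · exact ⟨0, by omega, rfl⟩
    · exact ⟨3, by omega, rfl⟩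

theorem tourVertex_adj_succ (hw : w ∉ Set.range vs) (k : ℕ) :
    (completeTripartiteMinusStar (m + 3) (m + 2) 2 vs u).Adj (tourVertex vs u w k)
      (tourVertex vs u w (k + 1)) := by
  match k with
  | 0 => exact completeTripartiteMinusStar_adj_inl_inr_inr.symm
  | 1 => exact completeTripartiteMinusStar_adj_inl_inr_inl.2 (.inr hw)
  | 2 => exact completeTripartiteMinusStar_adj_inr_inl_inr_inr
  | 3 =>
    rw [tourVertex_add_four_of_even _ _ _ (k := 0) .zero]
    exact completeTripartiteMinusStar_adj_inl_inr_inr.symm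
  | k + 4 =>
    rcases Nat.even_or_odd k with hk | hk
    · rw [tourVertex_add_four_of_even _ _ _ hk, tourVertex_add_four_of_odd _ _ _ hk.add_one]
      exact completeTripartiteMinusStar_adj_inl_inr_inl.2 (.inl (Fin.succAbove_ne _ _))
    · rw [tourVertex_add_four_of_odd _ _ _ hk, tourVertex_add_four_of_even _ _ _ hk.add_one]
      exact (completeTripartiteMinusStar_adj_inl_inr_inl.2 (.inl (Fin.succAbove_ne _ _))).symm

end Tour

theorem completeTripartiteMinusStar_isHamiltonian {m : ℕ} {vs : Fin (m + 2) → Fin (m + 3)}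
    (hvs : Function.Injective vs) (u : Fin (m + 2)) :
    (completeTripartiteMinusStar (m + 3) (m + 2) 2 vs u).IsHamiltonian := by
  obtain ⟨w, hw⟩ := hvs.exists_range_eq_compl_singleton (by simp)
  refine isHamiltonian_of_adj_succ (n := 2 * m + 4) (fun i ↦ tourVertex vs u w i) ?_ fun i ↦ ?_
  · refine (Fintype.bijective_iff_surjective_and_card _).2 ⟨fun v ↦ ?_, by simp; omega⟩
    obtain ⟨k, hk, rfl⟩ := exists_lt_tourVertex_eq u hw v
    exact ⟨⟨k, hk⟩, rfl⟩
  rw [Fin.val_add_one]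
  split_ifs with hi
  · subst hi
    change (completeTripartiteMinusStar _ _ 2 vs u).Adj (tourVertex vs u w (2 * m + 2 + 4))
      (tourVertex vs u w 0)
    rw [tourVertex_add_four_of_even _ _ _ ⟨m + 1, by ring⟩]
    exact completeTripartiteMinusStar_adj_inl_inr_inr
  · exact tourVertex_adj_succ u (by simp [hw]) _

/-- Remark, family 2, `p` odd and `n₁ = (p−1)/2`: For `a ≥ 3`, let `G` be
obtained from `K(a, a−1, 2)` by choosing `a − 1` distinct vertices `vs 0, …, vs (a−2)` in the
part `V₁` of size `a` and a vertex `u` in the part `V₂` of size `a − 1`, and deleting the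
`a − 1` edges `(vs i)u`. Then `G` is hamiltonian, `G` has at least
`(4 − 2p + 2n₁ + Σᵢ nᵢ(p − nᵢ))/2` edges where `p = 2a + 1` and `(n₁, n₂, n₃) = (a, a−1, 2)`,
but `G` fails Pósa's condition: for `r = a` one has `1 ≤ r < p/2` and `G` has at least `r`
vertices of degree at most `r`. -/
theorem tripartite_posa_fail_odd_half
    (a : ℕ) (ha : 3 ≤ a)
    (vs : Fin (a - 1) → Fin a) (hinj : Function.Injective vs)
    (u : Fin (a - 1))
    (G : SimpleGraph (Fin a ⊕ Fin (a - 1) ⊕ Fin 2))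
    (hGdef : G = (completeTripartite a (a - 1) 2).deleteEdges
      {e | ∃ i, e = s(Sum.inl (vs i), Sum.inr (Sum.inl u))}) :
    G.IsHamiltonian ∧
      (4 - 2 * (2 * (a : ℤ) + 1) + 2 * (a : ℤ) +
          ((a : ℤ) * ((2 * (a : ℤ) + 1) - a) +
            ((a : ℤ) - 1) * ((2 * (a : ℤ) + 1) - ((a : ℤ) - 1)) +
            2 * ((2 * (a : ℤ) + 1) - 2)) ≤ 2 * (G.edgeSet.ncard : ℤ)) ∧
      (1 ≤ a ∧ 2 * a < 2 * a + 1 ∧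
        a ≤ {x | (G.neighborSet x).ncard ≤ a}.ncard) := by
  obtain rfl : G = completeTripartiteMinusStar a (a - 1) 2 vs u := hGdef
  refine ⟨?_, ?_, by omega, by omega, ?_⟩
  · obtain ⟨m, rfl⟩ : ∃ m, a = m + 3 := ⟨a - 3, by omega⟩
    exact completeTripartiteMinusStar_isHamiltonian hinj u
  · have hK := completeTripartite_two_mul_ncard_edgeSet (a := a) (b := a - 1) (c := 2)
    have hG := ncard_edgeSet_completeTripartite_le (c := 2) (vs := vs) (u := u)
    rw [Fintype.card_fin] at hG
    zify [show 1 ≤ a by omega] at hK hG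
    linarith
  · have := card_add_one_le_ncard_setOf_ncard_neighborSet_le (c := 2) (u := u) hinj (r := a)
      (by omega) (by simp; omega)
    rw [Fintype.card_fin] at this
    omega
end
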